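/- arXiv:1003.2479 — 6 statements merged into one kernel-verified Lean document; each statement's English description precedes it below -/
import Mathlib

section
/- Suppose P is a Polish space, μ is an atomless finite Borel measure on P, κ is a cardinal with κ < cov(N), and A ⊆ P is a set such that both A and P ∖ A are unions of families of at most κ many μ-measurable sets (sets measurable with respect to the completion of μ). Then A is measurable with respect to the completion of μ, i.e., there are Borel sets B, N ⊆ P with μ(N) = 0 and A △ B ⊆ N. -/
/-!
Let `D` be the intersection of the measurable hulls `toMeasurable μ A` and `toMeasurable μ Aᶜ`;
it suffices to show `μ D = 0`. A `μ`-measurable subset of `A` is null inside the hull of `Aᶜ`,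
and vice versa, so if `μ D > 0` the fewer than `cov(N)` given sets would cover the space by
`μ.restrict D`-null sets. This is impossible: embedding the space into `ℝ` turns `μ.restrict D`
into a probability measure on `ℝ`, and its quantile function pulls a null cover of `ℝ` back to a
null cover of `(0, 1)` for Lebesgue measure, which has no fewer than `cov(N)` members.
-/

open MeasureTheory Cardinal

/-- `cov(N)`: the least cardinality of a family of Lebesgue-null subsets of `ℝ` whose union
is all of `ℝ`. -/
noncomputable def covNull : Cardinal :=
  sInf { c : Cardinal | ∃ S : Set (Set ℝ),
    #S = c ∧ (∀ A ∈ S, volume A = 0) ∧ ⋃₀ S = Set.univ }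

open Set

lemma Real.volume_Ioo_inter_Iic {c : ℝ} (hc : c ≤ 1) :
    volume (Ioo 0 1 ∩ Iic c) = ENNReal.ofReal c := by
  refine le_antisymm ?_ ?_
  · calc volume (Ioo 0 1 ∩ Iic c) ≤ volume (Ioc 0 c) :=
          measure_mono fun t ht => ⟨ht.1.1, ht.2⟩
      _ = ENNReal.ofReal c := by rw [Real.volume_Ioc, sub_zero]
  · calc ENNReal.ofReal c = volume (Ioo 0 c) := by rw [Real.volume_Ioo, sub_zero]
      _ ≤ volume (Ioo 0 1 ∩ Iic c) :=
          measure_mono fun t ht => ⟨⟨ht.1, ht.2.trans_le hc⟩, ht.2.le⟩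

namespace ProbabilityTheory

variable (ν : Measure ℝ)

/-- The generalized inverse of `cdf ν`; it is meaningful only on `Ioo 0 1`. -/
noncomputable def quantile (t : ℝ) : ℝ :=
  sInf {x | t ≤ cdf ν x}

variable {ν}

lemma quantile_le_iff {t : ℝ} (ht : t ∈ Ioo 0 1) {x : ℝ} : quantile ν t ≤ x ↔ t ≤ cdf ν x := by
  have hne : {x | t ≤ cdf ν x}.Nonempty :=
    ((tendsto_cdf_atTop ν).eventually_const_le ht.2).exists
  have hbdd : BddBelow {x | t ≤ cdf ν x} := by
    obtain ⟨y, hy⟩ := ((tendsto_cdf_atBot ν).eventually_lt_const ht.1).exists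
    exact ⟨y, fun x hx => le_of_not_gt fun hxy => (hx.trans ((cdf ν).mono hxy.le)).not_gt hy⟩
  have hmem : t ≤ cdf ν (quantile ν t) := by
    refine ge_of_tendsto (((cdf ν).right_continuous _).mono_left
      (nhdsWithin_mono _ Ioi_subset_Ici_self)) (eventually_nhdsWithin_of_forall fun y hy => ?_)
    obtain ⟨z, hz, hzy⟩ := exists_lt_of_csInf_lt hne hy
    exact hz.trans ((cdf ν).mono hzy.le)
  exact ⟨fun h => hmem.trans ((cdf ν).mono h), fun h => csInf_le hbdd h⟩

lemma monotoneOn_quantile : MonotoneOn (quantile ν) (Ioo 0 1) := fun _ hs _ ht hst =>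
  (quantile_le_iff hs).2 <| hst.trans <| (quantile_le_iff ht).1 le_rfl

lemma aemeasurable_quantile : AEMeasurable (quantile ν) (volume.restrict (Ioo 0 1)) :=
  aemeasurable_restrict_of_monotoneOn measurableSet_Ioo monotoneOn_quantile

lemma map_quantile_volume [IsProbabilityMeasure ν] :
    (volume.restrict (Ioo 0 1)).map (quantile ν) = ν := by
  refine Measure.ext_of_Iic _ _ fun x => ?_
  have hpre : quantile ν ⁻¹' Iic x ∩ Ioo 0 1 = Ioo 0 1 ∩ Iic (cdf ν x) := by
    ext t
    simp only [mem_inter_iff, mem_preimage, mem_Iic]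
    exact ⟨fun h => ⟨h.2, (quantile_le_iff h.2).1 h.1⟩,
      fun h => ⟨(quantile_le_iff h.1).2 h.2, h.1⟩⟩
  rw [Measure.map_apply_of_aemeasurable aemeasurable_quantile measurableSet_Iic,
    Measure.restrict_apply' measurableSet_Ioo, hpre, Real.volume_Ioo_inter_Iic (cdf_le_one ν x),
    ofReal_cdf]

lemma volume_preimage_quantile_inter_Ioo [IsProbabilityMeasure ν] {Z : Set ℝ} (hZ : ν Z = 0) :
    volume (quantile ν ⁻¹' Z ∩ Ioo 0 1) = 0 := by
  have h := Measure.le_map_apply (aemeasurable_quantile (ν := ν)) Z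
  rwa [map_quantile_volume, hZ, nonpos_iff_eq_zero, Measure.restrict_apply' measurableSet_Ioo] at h

end ProbabilityTheory

open ProbabilityTheory

lemma covNull_le {S : Set (Set ℝ)} (hnull : ∀ Z ∈ S, volume Z = 0) (hcov : ⋃₀ S = Set.univ) :
    covNull ≤ #S :=
  csInf_le' ⟨S, rfl, hnull, hcov⟩

lemma aleph0_lt_covNull : ℵ₀ < covNull := by
  obtain ⟨S, hcard, hnull, hcov⟩ := csInf_mem (s := {c : Cardinal | ∃ S : Set (Set ℝ),
      #S = c ∧ (∀ A ∈ S, volume A = 0) ∧ ⋃₀ S = Set.univ})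
    ⟨_, range ({·}), rfl, by rintro _ ⟨x, rfl⟩; exact Real.volume_singleton, by ext; simp⟩
  by_contra! h
  have hS : S.Countable := by
    rw [← countable_coe_iff, ← mk_le_aleph0_iff]
    exact hcard.trans_le h
  simpa [hcov] using (measure_sUnion_null_iff hS).2 hnull

lemma add_lt_covNull {a b : Cardinal} (ha : a < covNull) (hb : b < covNull) : a + b < covNull :=
  add_lt_of_lt aleph0_lt_covNull.le ha hb

lemma mul_lt_covNull {a b : Cardinal} (ha : a < covNull) (hb : b < covNull) : a * b < covNull :=
  mul_lt_of_lt aleph0_lt_covNull.le ha hb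

lemma one_lt_covNull : 1 < covNull :=
  one_lt_aleph0.trans aleph0_lt_covNull

/-- The integer translates of the sets of `S`, together with `ℤ` itself, cover `ℝ`. -/
lemma covNull_le_of_Ioo_subset {S : Set (Set ℝ)} (hnull : ∀ Z ∈ S, volume Z = 0)
    (hcov : Ioo 0 1 ⊆ ⋃₀ S) : covNull ≤ #S := by
  by_contra! hS
  let T : Set (Set ℝ) :=
    insert (range ((↑) : ℤ → ℝ)) (range fun p : ℤ × S => (· + (p.1 : ℝ)) ⁻¹' p.2)
  have hT : #T < covNull := by
    refine mk_insert_le.trans_lt (add_lt_covNull (mk_range_le.trans_lt ?_) one_lt_covNull)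
    rw [mk_prod, lift_id, lift_id, mk_int]
    exact mul_lt_covNull aleph0_lt_covNull hS
  refine hT.not_ge (covNull_le ?_ ?_)
  · rintro _ (rfl | ⟨⟨n, Z, hZ⟩, rfl⟩)
    · exact (countable_range _).measure_zero volume
    · exact (measure_preimage_add_right volume _ Z).trans (hnull Z hZ)
  · refine eq_univ_of_forall fun r => ?_
    by_cases hr : Int.fract r = 0
    · exact ⟨_, mem_insert _ _, Int.fract_eq_zero_iff.1 hr⟩
    · obtain ⟨Z, hZ, hrZ⟩ := hcov ⟨(Int.fract_nonneg r).lt_of_ne' hr, Int.fract_lt_one r⟩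
      refine ⟨_, mem_insert_of_mem _ ⟨(-⌊r⌋, ⟨Z, hZ⟩), rfl⟩, ?_⟩
      rwa [mem_preimage, Int.cast_neg, ← sub_eq_add_neg, Int.self_sub_floor]

lemma covNull_le_of_isProbabilityMeasure (ν : Measure ℝ) [IsProbabilityMeasure ν]
    {S : Set (Set ℝ)} (hnull : ∀ Z ∈ S, ν Z = 0) (hcov : ⋃₀ S = Set.univ) : covNull ≤ #S := by
  refine (covNull_le_of_Ioo_subset (S := (fun Z => quantile ν ⁻¹' Z ∩ Ioo 0 1) '' S) ?_ ?_).trans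
    mk_image_le
  · rintro _ ⟨Z, hZ, rfl⟩
    exact volume_preimage_quantile_inter_Ioo (hnull Z hZ)
  · intro t ht
    obtain ⟨Z, hZ, htZ⟩ := hcov.symm ▸ Set.mem_univ (quantile ν t)
    exact ⟨_, mem_image_of_mem _ hZ, htZ, ht⟩

lemma covNull_le_of_sUnion_eq_univ {α : Type} [MeasurableSpace α] [StandardBorelSpace α]
    (μ : Measure α) [SFinite μ] [NeZero μ] {S : Set (Set α)} (hnull : ∀ Z ∈ S, μ Z = 0)
    (hcov : ⋃₀ S = Set.univ) : covNull ≤ #S := by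
  obtain ⟨f, hf⟩ := exists_measurableEmbedding_real α
  have : IsProbabilityMeasure (μ.toFinite.map f) :=
    Measure.isProbabilityMeasure_map hf.measurable.aemeasurable
  have hS : covNull ≤ #S + 1 := by
    refine (covNull_le_of_isProbabilityMeasure (μ.toFinite.map f)
      (S := insert (range f)ᶜ ((f '' ·) '' S)) ?_ ?_).trans
      (mk_insert_le.trans (add_le_add_left mk_image_le 1))
    · rintro _ (rfl | ⟨Z, hZ, rfl⟩)
      · rw [hf.map_apply, preimage_compl, preimage_range, compl_univ, measure_empty]
      · rw [hf.map_apply, hf.injective.preimage_image, toFinite_apply_eq_zero_iff]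
        exact hnull Z hZ
    · refine eq_univ_of_forall fun r => ?_
      by_cases hr : r ∈ range f
      · obtain ⟨x, rfl⟩ := hr
        obtain ⟨Z, hZ, hxZ⟩ := hcov.symm ▸ Set.mem_univ x
        exact ⟨_, mem_insert_of_mem _ ⟨Z, hZ, rfl⟩, mem_image_of_mem f hxZ⟩
      · exact ⟨_, mem_insert _ _, hr⟩
  by_contra! h
  exact (add_lt_covNull h one_lt_covNull).not_ge hS

section NullMeasurable

variable {α : Type*} [MeasurableSpace α] {μ : Measure α}

open scoped symmDiff in
lemma nullMeasurableSet_iff_exists_symmDiff_subset {s : Set α} :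
    NullMeasurableSet s μ ↔
      ∃ B N : Set α, MeasurableSet B ∧ MeasurableSet N ∧ μ N = 0 ∧ s ∆ B ⊆ N := by
  refine ⟨fun hs => ?_, fun ⟨B, N, hB, _, hN, hsB⟩ => ?_⟩
  · obtain ⟨B, -, hB, hsB⟩ := hs.exists_measurable_superset_ae_eq
    refine ⟨B, toMeasurable μ (s ∆ B), hB, measurableSet_toMeasurable _ _, ?_,
      subset_toMeasurable _ _⟩
    rw [measure_toMeasurable, measure_symmDiff_eq_zero_iff]
    exact hsB.symm
  · exact hB.nullMeasurableSet.congr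
      (measure_symmDiff_eq_zero_iff.1 (measure_mono_null hsB hN)).symm

lemma restrict_toMeasurable_apply_eq_zero [SFinite μ] {s t : Set α} (ht : NullMeasurableSet t μ)
    (hts : Disjoint t s) : μ.restrict (toMeasurable μ s) t = 0 := by
  rw [Measure.restrict_toMeasurable_of_sFinite,
    Measure.restrict_apply₀ (ht.mono Measure.restrict_le_self), hts.inter_eq, measure_empty]

end NullMeasurable

theorem nullMeasurableSet_of_sUnion_eq_of_sUnion_eq_compl {α : Type} [MeasurableSpace α]
    [StandardBorelSpace α] {μ : Measure α} [SFinite μ] {s : Set α} {S T : Set (Set α)}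
    (hS : #S < covNull) (hT : #T < covNull)
    (hSm : ∀ E ∈ S, NullMeasurableSet E μ) (hTm : ∀ E ∈ T, NullMeasurableSet E μ)
    (hSs : ⋃₀ S = s) (hTs : ⋃₀ T = sᶜ) : NullMeasurableSet s μ := by
  set D := toMeasurable μ s ∩ toMeasurable μ sᶜ
  have hD : μ D = 0 := by
    by_contra hD
    have : NeZero (μ.restrict D) := ⟨by rwa [Ne, Measure.restrict_eq_zero]⟩
    refine (mk_union_le S T |>.trans_lt (add_lt_covNull hS hT)).not_ge
      (covNull_le_of_sUnion_eq_univ (μ.restrict D) ?_ ?_)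
    · rintro E (hE | hE)
      · exact (Measure.restrict_mono_set μ inter_subset_right).absolutelyContinuous
          (restrict_toMeasurable_apply_eq_zero (hSm E hE)
            (disjoint_compl_right_iff_subset.2 (hSs ▸ subset_sUnion_of_mem hE)))
      · exact (Measure.restrict_mono_set μ inter_subset_left).absolutelyContinuous
          (restrict_toMeasurable_apply_eq_zero (hTm E hE)
            (subset_compl_iff_disjoint_right.1 (hTs ▸ subset_sUnion_of_mem hE)))
    · rw [sUnion_union, hSs, hTs, union_compl_self]
  have hs : toMeasurable μ s =ᵐ[μ] s := by
    have hsub : toMeasurable μ s \ s ⊆ D := fun x hx => ⟨hx.1, subset_toMeasurable μ sᶜ hx.2⟩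
    refine ae_eq_set.2 ⟨measure_mono_null hsub hD, ?_⟩
    rw [sdiff_eq_empty.2 (subset_toMeasurable μ s), measure_empty]
  exact (measurableSet_toMeasurable μ s).nullMeasurableSet.congr hs

theorem stmt4_general {P : Type} [TopologicalSpace P] [PolishSpace P] [MeasurableSpace P] [BorelSpace P]
    (μ : Measure P) (hfin : IsFiniteMeasure μ)
    (κ : Cardinal) (hκ : κ < covNull)
    (A : Set P)
    (hA : ∃ S : Set (Set P), #S ≤ κ ∧
      (∀ E ∈ S, ∃ B N : Set P, MeasurableSet B ∧ MeasurableSet N ∧ μ N = 0 ∧ symmDiff E B ⊆ N) ∧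
      ⋃₀ S = A)
    (hAc : ∃ S : Set (Set P), #S ≤ κ ∧
      (∀ E ∈ S, ∃ B N : Set P, MeasurableSet B ∧ MeasurableSet N ∧ μ N = 0 ∧ symmDiff E B ⊆ N) ∧
      ⋃₀ S = Aᶜ) :
    ∃ B N : Set P, MeasurableSet B ∧ MeasurableSet N ∧ μ N = 0 ∧ symmDiff A B ⊆ N := by
  simp only [← nullMeasurableSet_iff_exists_symmDiff_subset] at hA hAc ⊢
  obtain ⟨S, hSκ, hSm, hSA⟩ := hA
  obtain ⟨T, hTκ, hTm, hTA⟩ := hAc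
  exact nullMeasurableSet_of_sUnion_eq_of_sUnion_eq_compl (hSκ.trans_lt hκ) (hTκ.trans_lt hκ)
    hSm hTm hSA hTA

/-- Suppose `P` is a Polish space, `μ` is an atomless finite Borel measure on `P`,
`κ < cov(N)`, and `A ⊆ P` is such that both `A` and `P \ A` are unions of families of at most
`κ` many sets measurable with respect to the completion of `μ`. Then `A` is measurable with
respect to the completion of `μ`. -/
theorem stmt4 {P : Type} [TopologicalSpace P] [PolishSpace P] [MeasurableSpace P] [BorelSpace P]
    (μ : Measure P) (hfin : IsFiniteMeasure μ) (hatom : ∀ x : P, μ {x} = 0)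
    (κ : Cardinal) (hκ : κ < covNull)
    (A : Set P)
    (hA : ∃ S : Set (Set P), #S ≤ κ ∧
      (∀ E ∈ S, ∃ B N : Set P, MeasurableSet B ∧ MeasurableSet N ∧ μ N = 0 ∧ symmDiff E B ⊆ N) ∧
      ⋃₀ S = A)
    (hAc : ∃ S : Set (Set P), #S ≤ κ ∧
      (∀ E ∈ S, ∃ B N : Set P, MeasurableSet B ∧ MeasurableSet N ∧ μ N = 0 ∧ symmDiff E B ⊆ N) ∧
      ⋃₀ S = Aᶜ) :
    ∃ B N : Set P, MeasurableSet B ∧ MeasurableSet N ∧ μ N = 0 ∧ symmDiff A B ⊆ N :=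
  stmt4_general μ hfin κ hκ A hA hAc
end

section
/- Let P be a Polish space and κ a cardinal. Suppose that for every finite Borel measure μ on P and every family of at most κ many Borel μ-null subsets of P, the union of the family is contained in a Borel μ-null set. Then the union of any family of at most κ many Borel subsets of P is universally measurable. -/
/-!
The covering hypothesis passes from a finite measure `ν` to the σ-finite `μ`, since they have the
same null sets. Up to a `μ`-null set, `⋃₀ S` is the union `B` of a countable subfamily of `S`, so
`B` is measurable and every `A \ B` with `A ∈ S` is `μ`-null. The hypothesis covers these at most
`κ` sets by one measurable null set `N`, and `⋃₀ S` differs from `B` only inside `N`.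
-/

open MeasureTheory Cardinal

universe u

theorem Set.sUnion_sdiff_eq_sUnion_image_sdiff {α : Type*} (S : Set (Set α)) (B : Set α) :
    ⋃₀ S \ B = ⋃₀ ((· \ B) '' S) := by
  ext x
  simp only [Set.mem_sdiff, Set.mem_sUnion, Set.sUnion_image, Set.mem_iUnion, exists_prop]
  grind

namespace MeasureTheory

def NullUnionsCovered (κ : Cardinal.{u}) {α : Type u} [MeasurableSpace α] (μ : Measure α) :
    Prop :=
  ∀ S : Set (Set α), #S ≤ κ → (∀ A ∈ S, MeasurableSet A ∧ μ A = 0) →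
    ∃ N : Set α, MeasurableSet N ∧ μ N = 0 ∧ ⋃₀ S ⊆ N

theorem NullUnionsCovered.of_absolutelyContinuous {α : Type u} [MeasurableSpace α]
    {κ : Cardinal.{u}} {μ ν : Measure α} (hν : NullUnionsCovered κ ν) (hμν : μ ≪ ν)
    (hνμ : ν ≪ μ) : NullUnionsCovered κ μ := by
  intro S hS hnull
  obtain ⟨N, hN, hνN, hSN⟩ := hν S hS fun A hA => ⟨(hnull A hA).1, hνμ (hnull A hA).2⟩
  exact ⟨N, hN, hμν hνN, hSN⟩

theorem NullUnionsCovered.exists_measurable_symmDiff_sUnion_subset_null {α : Type u}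
    [MeasurableSpace α] {κ : Cardinal.{u}} {μ : Measure α} [SFinite μ]
    (hμ : NullUnionsCovered κ μ) {S : Set (Set α)} (hS : #S ≤ κ)
    (hSmeas : ∀ A ∈ S, MeasurableSet A) :
    ∃ B N : Set α, MeasurableSet B ∧ MeasurableSet N ∧ μ N = 0 ∧ symmDiff (⋃₀ S) B ⊆ N := by
  obtain ⟨D, hDS, hDcount, hSD⟩ := Measure.exists_ae_subset_biUnion_countable μ hSmeas
  have hB : MeasurableSet (⋃₀ D) := .sUnion hDcount fun A hA => hSmeas A (hDS hA)
  obtain ⟨N, hN, hμN, hSN⟩ := hμ ((· \ ⋃₀ D) '' S) (mk_image_le.trans hS) <| by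
    rintro _ ⟨A, hA, rfl⟩
    exact ⟨(hSmeas A hA).diff hB, ae_le_set.mp (hSD A hA)⟩
  refine ⟨⋃₀ D, N, hB, hN, hμN, ?_⟩
  rw [symmDiff_of_ge (Set.sUnion_subset_sUnion hDS), Set.sUnion_sdiff_eq_sUnion_image_sdiff]
  exact hSN

end MeasureTheory

theorem stmt6_general {P : Type} [MeasurableSpace P]
    (κ : Cardinal)
    (h : ∀ μ : Measure P, IsFiniteMeasure μ →
      ∀ S : Set (Set P), #S ≤ κ → (∀ A ∈ S, MeasurableSet A ∧ μ A = 0) →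
        ∃ N : Set P, MeasurableSet N ∧ μ N = 0 ∧ ⋃₀ S ⊆ N) :
    ∀ S : Set (Set P), #S ≤ κ → (∀ A ∈ S, MeasurableSet A) →
      ∀ μ : Measure P, SigmaFinite μ →
        ∃ B N : Set P, MeasurableSet B ∧ MeasurableSet N ∧ μ N = 0 ∧ symmDiff (⋃₀ S) B ⊆ N := by
  intro S hS hSmeas μ _
  obtain ⟨ν, hν, hμν, hνμ⟩ := exists_isFiniteMeasure_absolutelyContinuous μ
  have hμ : NullUnionsCovered κ μ := NullUnionsCovered.of_absolutelyContinuous (h ν hν) hμν hνμ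
  exact hμ.exists_measurable_symmDiff_sUnion_subset_null hS hSmeas

/-- Let `P` be a Polish space and `κ` a cardinal. Suppose that for every finite Borel measure `μ`
on `P` and every family of at most `κ` many Borel `μ`-null subsets of `P`, the union of the
family is contained in a Borel `μ`-null set. Then the union of any family of at most `κ` many
Borel subsets of `P` is universally measurable. -/
theorem stmt6 {P : Type} [TopologicalSpace P] [PolishSpace P] [MeasurableSpace P] [BorelSpace P]
    (κ : Cardinal)
    (h : ∀ μ : Measure P, IsFiniteMeasure μ →
      ∀ S : Set (Set P), #S ≤ κ → (∀ A ∈ S, MeasurableSet A ∧ μ A = 0) →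
        ∃ N : Set P, MeasurableSet N ∧ μ N = 0 ∧ ⋃₀ S ⊆ N) :
    ∀ S : Set (Set P), #S ≤ κ → (∀ A ∈ S, MeasurableSet A) →
      ∀ μ : Measure P, SigmaFinite μ →
        ∃ B N : Set P, MeasurableSet B ∧ MeasurableSet N ∧ μ N = 0 ∧ symmDiff (⋃₀ S) B ⊆ N :=
  stmt6_general κ h
end

section
/- If P is a Polish space and μ is an atomless Borel probability measure on P, then the least cardinality of a family of μ-null subsets of P whose union is P equals cov(N), the least cardinality of a family of Lebesgue-null subsets of ℝ whose union is ℝ. -/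
/-!
Pulling a cover by null sets back along a map whose preimages of null sets are null gives a
cover by null sets of at most the same cardinality, so such a map can only decrease the
covering number. For an atomless probability measure `μ` on a standard Borel space there are
such maps in both directions between `μ` and Lebesgue measure: the distribution function of
`μ`, transported to `ℝ` by a Borel embedding, is continuous and pushes `μ` forward to Lebesgue
measure on `[0, 1]`; conversely `μ` is the image of Lebesgue measure on `[0, 1]` under a
measurable map, and the fractional part maps `ℝ` to `[0, 1]`.
-/

open MeasureTheory Cardinal

open ProbabilityTheory Set unitInterval

universe u

section NullCoverNumber

variable {α β : Type u} [MeasurableSpace α] [MeasurableSpace β]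

noncomputable def nullCoverNumber (μ : Measure α) : Cardinal.{u} :=
  sInf {c | ∃ S : Set (Set α), #S = c ∧ (∀ A ∈ S, μ A = 0) ∧ ⋃₀ S = Set.univ}

theorem nullCoverNumber_eq_sInf_measurable_null (μ : Measure α) :
    nullCoverNumber μ = sInf {c | ∃ S : Set (Set α), #S = c ∧
      (∀ A ∈ S, ∃ N : Set α, MeasurableSet N ∧ A ⊆ N ∧ μ N = 0) ∧ ⋃₀ S = Set.univ} := by
  simp only [nullCoverNumber, and_left_comm (a := MeasurableSet _),
    exists_measurable_superset_iff_measure_eq_zero]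

theorem nullCoverNumber_set_nonempty (μ : Measure α) [NullSingletonClass μ] :
    {c | ∃ S : Set (Set α), #S = c ∧ (∀ A ∈ S, μ A = 0) ∧ ⋃₀ S = Set.univ}.Nonempty :=
  ⟨_, range singleton, rfl, forall_mem_range.2 measure_singleton,
    eq_univ_of_forall fun x => mem_sUnion.2 ⟨{x}, mem_range_self x, rfl⟩⟩

theorem nullCoverNumber_le_of_preimage_null {μ : Measure α} {ν : Measure β}
    [NullSingletonClass ν] {f : α → β} (hf : ∀ s, ν s = 0 → μ (f ⁻¹' s) = 0) :
    nullCoverNumber μ ≤ nullCoverNumber ν := by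
  refine le_csInf (nullCoverNumber_set_nonempty ν) ?_
  rintro _ ⟨S, rfl, hnull, hcover⟩
  refine le_trans ?_ (mk_image_le (f := preimage f))
  refine csInf_le' ⟨preimage f '' S, rfl, ?_, ?_⟩
  · rintro _ ⟨A, hA, rfl⟩
    exact hf A (hnull A hA)
  · rw [sUnion_image, ← preimage_iUnion₂, ← sUnion_eq_biUnion, hcover, preimage_univ]

theorem MeasureTheory.Measure.QuasiMeasurePreserving.nullCoverNumber_le {μ : Measure α}
    {ν : Measure β} [NullSingletonClass ν] {f : α → β} (hf : Measure.QuasiMeasurePreserving f μ ν) :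
    nullCoverNumber μ ≤ nullCoverNumber ν :=
  nullCoverNumber_le_of_preimage_null fun _ => hf.preimage_null

end NullCoverNumber

theorem MeasurableEmbedding.nullSingletonClass_map {α β : Type*} [MeasurableSpace α]
    [MeasurableSpace β] {μ : Measure α} [NullSingletonClass μ] {f : α → β}
    (hf : MeasurableEmbedding f) : NullSingletonClass (μ.map f) :=
  ⟨fun x => by
    rw [hf.map_apply]
    exact (subsingleton_singleton.preimage hf.injective).measure_zero μ⟩

theorem Monotone.exists_preimage_Iic_eq {F : ℝ → ℝ} (hmono : Monotone F) (hF : Continuous F)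
    {t : ℝ} (hlo : ∃ x, F x ≤ t) (hhi : ∃ x, t < F x) : ∃ a, F ⁻¹' Iic t = Iic a ∧ F a = t := by
  obtain ⟨b, hb⟩ := hhi
  have hbdd : BddAbove (F ⁻¹' Iic t) :=
    ⟨b, fun x hx => le_of_not_gt fun hbx => (hb.trans_le (hmono hbx.le)).not_ge hx⟩
  set a := sSup (F ⁻¹' Iic t)
  have ha : F a ≤ t := (isClosed_Iic.preimage hF).csSup_mem hlo hbdd
  refine ⟨a, Subset.antisymm (fun x hx => le_csSup hbdd hx) fun x hx => (hmono hx).trans ha,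
    le_antisymm ha ?_⟩
  by_contra! hlt
  obtain ⟨x, hxt, hax⟩ :=
    ((hF.continuousAt.eventually_lt_const hlt).filter_mono (nhdsWithin_le_nhds (s := Ioi a))
      |>.and self_mem_nhdsWithin).exists
  exact (le_csSup hbdd (show F x ≤ t from hxt.le)).not_gt hax

section Cdf

variable {ν : Measure ℝ} [IsProbabilityMeasure ν] [NullSingletonClass ν]

theorem continuous_cdf : Continuous (cdf ν) := by
  refine continuous_iff_continuousAt.2 fun x => ?_
  rw [(cdf ν).mono.continuousAt_iff_leftLim_eq_rightLim, (cdf ν).rightLim_eq]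
  have hjump : ENNReal.ofReal (cdf ν x - Function.leftLim (cdf ν) x) = 0 := by
    rw [← StieltjesFunction.measure_singleton, measure_cdf, measure_singleton]
  linarith [ENNReal.ofReal_eq_zero.1 hjump, (cdf ν).mono.leftLim_le (le_refl x)]

theorem map_cdf_eq_volume_restrict : ν.map (cdf ν) = volume.restrict (Icc 0 1) := by
  refine Measure.ext_of_Iic _ _ fun t => ?_
  rw [Measure.map_apply (cdf ν).mono.measurable measurableSet_Iic,
    Measure.restrict_apply' measurableSet_Icc]
  rcases le_or_gt 1 t with h1 | h1
  · have huniv : cdf ν ⁻¹' Iic t = Set.univ :=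
      eq_univ_of_forall fun x => (cdf_le_one ν x).trans h1
    rw [huniv, measure_univ,
      inter_eq_right.2 (Icc_subset_Iic_self.trans (Iic_subset_Iic.2 h1)), Real.volume_Icc]
    simp
  have hIcc : Iic t ∩ Icc 0 1 = Icc 0 t := by
    ext x
    simp only [mem_inter_iff, mem_Iic, mem_Icc]
    grind
  rw [hIcc, Real.volume_Icc, sub_zero]
  by_cases hlo : ∃ x, cdf ν x ≤ t
  · obtain ⟨a, ha, hat⟩ := (monotone_cdf ν).exists_preimage_Iic_eq continuous_cdf hlo
      ((tendsto_cdf_atTop ν).eventually_const_lt h1).exists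
    rw [ha, ← ofReal_cdf, hat]
  · push Not at hlo
    have ht : t ≤ 0 := le_of_not_gt fun ht =>
      let ⟨x, hx⟩ := ((tendsto_cdf_atBot ν).eventually_lt_const ht).exists
      (hlo x).not_gt hx
    have hempty : cdf ν ⁻¹' Iic t = ∅ :=
      eq_empty_iff_forall_notMem.2 fun x hx => (hlo x).not_ge hx
    rw [hempty, measure_empty, ENNReal.ofReal_of_nonpos ht]

theorem quasiMeasurePreserving_cdf : Measure.QuasiMeasurePreserving (cdf ν) ν volume :=
  ⟨(cdf ν).mono.measurable,
    map_cdf_eq_volume_restrict (ν := ν) ▸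
      Measure.absolutelyContinuous_of_le Measure.restrict_le_self⟩

end Cdf

theorem Real.volume_preimage_fract_null {s : Set ℝ} (hs : volume s = 0) :
    volume (Int.fract ⁻¹' s) = 0 := by
  rw [Int.preimage_fract]
  refine measure_iUnion_null fun m => ?_
  simp_rw [sub_eq_add_neg]
  rw [measure_preimage_add_right]
  exact measure_mono_null inter_subset_left hs

theorem covNull_le_nullCoverNumber_unitInterval :
    covNull ≤ nullCoverNumber (volume : Measure I) := by
  let fract : ℝ → I := fun x => ⟨Int.fract x, Int.fract_nonneg x, (Int.fract_lt_one x).le⟩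
  refine nullCoverNumber_le_of_preimage_null (f := fract) fun s hs => ?_
  have hpre : fract ⁻¹' s = Int.fract ⁻¹' (Subtype.val '' s) := by
    ext x
    simp [fract, (Int.fract_lt_one x).le]
  rw [hpre]
  exact Real.volume_preimage_fract_null (volume_apply ▸ hs)

section StandardBorel

variable {Ω : Type} [MeasurableSpace Ω] [StandardBorelSpace Ω] (μ : Measure Ω)
  [IsProbabilityMeasure μ] [NullSingletonClass μ]

theorem nullCoverNumber_le_covNull : nullCoverNumber μ ≤ covNull := by
  have he := measurableEmbedding_embeddingReal Ω
  have := Measure.isProbabilityMeasure_map (μ := μ) he.measurable.aemeasurable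
  have := he.nullSingletonClass_map (μ := μ)
  exact (quasiMeasurePreserving_cdf.comp
    (MeasurePreserving.mk he.measurable rfl).quasiMeasurePreserving).nullCoverNumber_le

theorem covNull_le_nullCoverNumber [Nonempty Ω] : covNull ≤ nullCoverNumber μ := by
  obtain ⟨f, hf, hmap⟩ := μ.exists_measurable_map_eq
  exact covNull_le_nullCoverNumber_unitInterval.trans
    (MeasurePreserving.mk hf hmap).quasiMeasurePreserving.nullCoverNumber_le

end StandardBorel

/-- If `P` is a Polish space and `μ` is an atomless Borel probability measure on `P`, then the
least cardinality of a family of `μ`-null subsets of `P` (sets contained in a Borel set of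
`μ`-measure `0`) whose union is `P` equals `cov(N)`. -/
theorem stmt8 {P : Type} [TopologicalSpace P] [PolishSpace P] [MeasurableSpace P] [BorelSpace P]
    (μ : Measure P) (hprob : IsProbabilityMeasure μ) (hatom : ∀ x : P, μ {x} = 0) :
    sInf { c : Cardinal | ∃ S : Set (Set P), #S = c ∧
      (∀ A ∈ S, ∃ N : Set P, MeasurableSet N ∧ A ⊆ N ∧ μ N = 0) ∧ ⋃₀ S = Set.univ }
      = covNull := by
  have : NullSingletonClass μ := ⟨hatom⟩
  have := nonempty_of_isProbabilityMeasure μ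
  rw [← nullCoverNumber_eq_sInf_measurable_null]
  exact le_antisymm (nullCoverNumber_le_covNull μ) (covNull_le_nullCoverNumber μ)
end

section
/- If S ⊆ ℝ is universally measurable and does not have the Baire property, then for every set P ⊆ ℝ × ℝ with the Baire property, the symmetric difference (S × ℝ) △ P is not universally null. -/
open MeasureTheory Filter Topology Set

/-!
Pick an open `U` with `P △ U` meagre. By the easy half of the Kuratowski–Ulam theorem, for
comeagre many `x` the vertical section of `P △ U` at `x` is meagre. For such an `x` in `S` but not
in the projection of `U`, the section of `(S × ℝ) △ P` at `x` is comeagre; for such an `x` in the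
projection of `U` but not in `S`, it is comeagre in the nonempty open section of `U`. Either way it
contains an uncountable Borel set, which carries an atomless probability measure, so the section,
and hence `(S × ℝ) △ P`, is not universally null. Thus `S` differs from the open projection of
`U` by a meagre set, i.e. `S` has the Baire property.
-/

section Baire

variable {X Y : Type*} [TopologicalSpace X] [TopologicalSpace Y]

theorem Set.Countable.isMeagre [T1Space X] [∀ x : X, (𝓝[≠] x).NeBot] {s : Set X}
    (hs : s.Countable) : IsMeagre s := by
  rw [← biUnion_of_singleton s]
  exact isMeagre_biUnion hs fun x _ =>
    (isClosed_singleton.isNowhereDense_iff.mpr (interior_singleton x)).isMeagre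

theorem IsOpen.not_countable_inter_of_mem_residual [BaireSpace X] [T1Space X]
    [∀ x : X, (𝓝[≠] x).NeBot] {V T : Set X} (hV : IsOpen V) (hne : V.Nonempty)
    (hT : T ∈ residual X) : ¬ (V ∩ T).Countable := by
  intro hc
  have hTc : IsMeagre Tᶜ := by rwa [IsMeagre, compl_compl]
  refine not_isMeagre_of_isOpen hV hne ((hc.isMeagre.union hTc).mono fun x hx => ?_)
  by_cases hxT : x ∈ T
  · exact Or.inl ⟨hx, hxT⟩
  · exact Or.inr hxT

/-- The sets `{x | {x} × b ⊆ F}`, for `b` running through a countable basis, are closed and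
nowhere dense, and every `x` outside all of them has a section of `F` with empty interior. -/
theorem IsNowhereDense.eventually_isNowhereDense_preimage_prodMk [SecondCountableTopology Y]
    {t : Set (X × Y)} (ht : IsNowhereDense t) :
    ∀ᶠ x in residual X, IsNowhereDense (Prod.mk x ⁻¹' t) := by
  set F := closure t
  have hF : IsClosed F := isClosed_closure
  let A : Set Y → Set X := fun b => ⋂ y ∈ b, (·, y) ⁻¹' F
  have hA : ∀ b ∈ TopologicalSpace.countableBasis Y,
      ∀ᶠ x in residual X, b.Nonempty → x ∉ A b := by
    intro b hb
    by_cases hne : b.Nonempty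
    · obtain ⟨y, hy⟩ := hne
      have hAb : IsClosed (A b) := isClosed_biInter fun y _ => hF.preimage (.prodMk_left y)
      have hbo := TopologicalSpace.isOpen_of_mem_countableBasis hb
      have hint : interior (A b) ×ˢ b ⊆ interior F :=
        (isOpen_interior.prod hbo).subset_interior_iff.mpr
          fun p hp => mem_iInter₂.mp (interior_subset hp.1) p.2 hp.2
      have hAbm : IsMeagre (A b) := by
        refine (hAb.isNowhereDense_iff.mpr (eq_empty_iff_forall_notMem.mpr fun x hx => ?_)).isMeagre
        simpa [F, show interior (closure t) = ∅ from ht] using hint (mk_mem_prod hx hy)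
      exact mem_of_superset hAbm fun x hx _ => hx
    · exact Eventually.of_forall fun x h => absurd h hne
  filter_upwards [(eventually_countable_ball (TopologicalSpace.countable_countableBasis Y)).mpr hA]
    with x hx
  refine IsNowhereDense.mono (preimage_mono subset_closure) ?_
  rw [(hF.preimage (Continuous.prodMk_right x)).isNowhereDense_iff, eq_empty_iff_forall_notMem]
  intro y hy
  obtain ⟨b, hb, hyb, hbF⟩ :=
    (TopologicalSpace.isBasis_countableBasis Y).exists_subset_of_mem_open hy isOpen_interior
  exact hx b hb ⟨y, hyb⟩ (mem_iInter₂.mpr fun y' hy' => (interior_subset (hbF hy') :))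

theorem IsMeagre.eventually_isMeagre_preimage_prodMk [SecondCountableTopology Y]
    {M : Set (X × Y)} (hM : IsMeagre M) :
    ∀ᶠ x in residual X, IsMeagre (Prod.mk x ⁻¹' M) := by
  obtain ⟨T, hT, hTc, hMT⟩ := isMeagre_iff_countable_union_isNowhereDense.mp hM
  filter_upwards [(eventually_countable_ball hTc).mpr
    fun t ht => (hT t ht).eventually_isNowhereDense_preimage_prodMk] with x hx
  refine IsMeagre.mono (preimage_mono hMT) ?_
  rw [preimage_sUnion]
  exact isMeagre_biUnion hTc fun t ht => (hx t ht).isMeagre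

end Baire

section UniversallyNull

variable {α β : Type*} [MeasurableSpace α] [MeasurableSpace β]

def IsUniversallyNull (s : Set α) : Prop :=
  ∀ μ : Measure α, SigmaFinite μ → (∀ p : α, μ {p} = 0) →
    ∃ N : Set α, MeasurableSet N ∧ s ⊆ N ∧ μ N = 0

theorem IsUniversallyNull.preimage {s : Set α} (hs : IsUniversallyNull s) {f : β → α}
    (hf : MeasurableEmbedding f) : IsUniversallyNull (f ⁻¹' s) := by
  intro μ _ hμ
  have : NullSingletonClass μ := ⟨hμ⟩
  have := hf.sigmaFinite_map (μ := μ)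
  obtain ⟨N, hN, hsN, hμN⟩ := hs (μ.map f) inferInstance fun p => by
    rw [hf.map_apply]
    exact (subsingleton_singleton.preimage hf.injective).measure_zero μ
  exact ⟨f ⁻¹' N, hf.measurable hN, preimage_mono hsN, by rwa [← hf.map_apply]⟩

/-- The Borel isomorphism theorem transports Lebesgue measure on `[0, 1]` onto `H`. -/
theorem MeasurableSet.exists_nullSingletonClass_isProbabilityMeasure [StandardBorelSpace α]
    {H : Set α} (hH : MeasurableSet H) (hc : ¬ H.Countable) :
    ∃ μ : Measure α, IsProbabilityMeasure μ ∧ NullSingletonClass μ ∧ μ Hᶜ = 0 := by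
  have := hH.standardBorel
  have : ¬ Countable H := by rwa [countable_coe_iff]
  let e : ℝ ≃ᵐ H := PolishSpace.measurableEquivOfNotCountable not_countable this
  have hf : MeasurableEmbedding (Subtype.val ∘ e) :=
    (MeasurableEmbedding.subtype_coe hH).comp e.measurableEmbedding
  let ν : Measure ℝ := volume.restrict (Icc 0 1)
  have : IsProbabilityMeasure ν := ⟨by simp [ν]⟩
  refine ⟨ν.map (Subtype.val ∘ e), Measure.isProbabilityMeasure_map hf.measurable.aemeasurable,
    ⟨fun p => ?_⟩, ?_⟩
  · rw [hf.map_apply]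
    exact (subsingleton_singleton.preimage hf.injective).measure_zero ν
  · rw [hf.map_apply, preimage_compl, preimage_eq_univ_iff.mpr fun _ ⟨r, hr⟩ => hr ▸ (e r).2,
      compl_univ, measure_empty]

theorem IsUniversallyNull.countable_of_subset [StandardBorelSpace α] {s H : Set α}
    (hs : IsUniversallyNull s) (hH : MeasurableSet H) (hHs : H ⊆ s) : H.Countable := by
  by_contra hc
  obtain ⟨μ, _, hμ, hμH⟩ := hH.exists_nullSingletonClass_isProbabilityMeasure hc
  obtain ⟨N, -, hsN, hμN⟩ := hs μ inferInstance measure_singleton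
  have hcover : univ ⊆ Hᶜ ∪ N :=
    (compl_union_self H).symm.subset.trans (union_subset_union_right _ (hHs.trans hsN))
  have : μ univ = 0 := measure_mono_null hcover (measure_union_null hμH hμN)
  simp at this

theorem IsUniversallyNull.eq_empty_of_isMeagre_diff [TopologicalSpace α] [PolishSpace α]
    [BorelSpace α] [∀ x : α, (𝓝[≠] x).NeBot] {s V : Set α} (hs : IsUniversallyNull s)
    (hV : IsOpen V) (hVs : IsMeagre (V \ s)) : V = ∅ := by
  by_contra hne
  obtain ⟨G, hGs, hG, hGd⟩ := mem_residual.mp hVs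
  have hVG : V ∩ G ⊆ s := fun x hx => by_contra fun hxs => hGs hx.2 ⟨hx.1, hxs⟩
  exact hV.not_countable_inter_of_mem_residual (nonempty_iff_ne_empty.mpr hne)
    (residual_of_dense_Gδ hG hGd)
    (hs.countable_of_subset (hV.measurableSet.inter hG.measurableSet) hVG)

end UniversallyNull

theorem stmt10_general (S : Set ℝ)
    (hnbp : ¬ ∃ U : Set ℝ, IsOpen U ∧ IsMeagre (symmDiff S U)) :
    ∀ P : Set (ℝ × ℝ), (∃ U : Set (ℝ × ℝ), IsOpen U ∧ IsMeagre (symmDiff P U)) →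
      ¬ (∀ μ : Measure (ℝ × ℝ), SigmaFinite μ → (∀ p : ℝ × ℝ, μ {p} = 0) →
          ∃ N : Set (ℝ × ℝ), MeasurableSet N ∧
            symmDiff (S ×ˢ (Set.univ : Set ℝ)) P ⊆ N ∧ μ N = 0) := by
  rintro P ⟨U, hU, hPU⟩ (hnull : IsUniversallyNull _)
  refine hnbp ⟨Prod.fst '' U, isOpenMap_fst U hU, ?_⟩
  have hsec := fun x => hnull.preimage (measurableEmbedding_prodMk_left x)
  filter_upwards [hPU.eventually_isMeagre_preimage_prodMk] with x hx hxSU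
  rcases mem_symmDiff.mp hxSU with ⟨hxS, hxU⟩ | ⟨⟨p, hpU, rfl⟩, hxS⟩
  · refine univ_nonempty.ne_empty ((hsec x).eq_empty_of_isMeagre_diff isOpen_univ (hx.mono ?_))
    intro y hy
    have hyU : (x, y) ∉ U := fun h => hxU ⟨_, h, rfl⟩
    simp_all [mem_symmDiff]
  · have hUx : (Prod.mk p.1 ⁻¹' U).Nonempty := ⟨p.2, hpU⟩
    refine hUx.ne_empty
      ((hsec p.1).eq_empty_of_isMeagre_diff (hU.preimage (.prodMk_right p.1)) (hx.mono ?_))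
    intro y hy
    simp_all [mem_symmDiff]

/-- If `S ⊆ ℝ` is universally measurable and does not have the Baire property, then for every set
`P ⊆ ℝ × ℝ` with the Baire property, the symmetric difference `(S × ℝ) △ P` is not universally
null. -/
theorem stmt10 (S : Set ℝ)
    (hum : ∀ μ : Measure ℝ, SigmaFinite μ →
      ∃ B N : Set ℝ, MeasurableSet B ∧ MeasurableSet N ∧ μ N = 0 ∧ symmDiff S B ⊆ N)
    (hnbp : ¬ ∃ U : Set ℝ, IsOpen U ∧ IsMeagre (symmDiff S U)) :
    ∀ P : Set (ℝ × ℝ), (∃ U : Set (ℝ × ℝ), IsOpen U ∧ IsMeagre (symmDiff P U)) →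
      ¬ (∀ μ : Measure (ℝ × ℝ), SigmaFinite μ → (∀ p : ℝ × ℝ, μ {p} = 0) →
          ∃ N : Set (ℝ × ℝ), MeasurableSet N ∧
            symmDiff (S ×ˢ (Set.univ : Set ℝ)) P ⊆ N ∧ μ N = 0) :=
  stmt10_general S hnbp
end

section
/- Suppose that cov(M) = cof(M). Then there exists a universally null subset of ℝ that is not meager. -/
open MeasureTheory Cardinal

/-- `cov(M)`: the least cardinality of a family of meager subsets of `ℝ` whose union is `ℝ`. -/
noncomputable def covMeager : Cardinal :=
  sInf { c : Cardinal | ∃ S : Set (Set ℝ),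
    #S = c ∧ (∀ A ∈ S, IsMeagre A) ∧ ⋃₀ S = Set.univ }

/-- `cof(M)`: the least cardinality of a family `D` of meager subsets of `ℝ` such that every
meager subset of `ℝ` is contained in some member of `D`. -/
noncomputable def cofMeager : Cardinal :=
  sInf { c : Cardinal | ∃ D : Set (Set ℝ),
    #D = c ∧ (∀ A ∈ D, IsMeagre A) ∧ ∀ M : Set ℝ, IsMeagre M → ∃ A ∈ D, M ⊆ A }

/-!
Let `κ = cov(M) = cof(M)`, enumerate a cofinal family of meagre sets as `(M i)_{i < κ}` and pick
`x i ∉ ⋃_{j ≤ i} M j`, which is possible because fewer than `cov(M)` meagre sets do not cover `ℝ`.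
The set `A = {x i}` is a Luzin-type set: it is not meagre, and it meets every meagre set in fewer
than `cov(M)` points.

Let `ν` be an atomless probability measure. There is a `ν`-null set `G` with meagre complement,
so it remains to see that `A \ G`, a set of size `< cov(M)`, is `ν`-null. Pushing `ν` forward
along its distribution function gives a measure `ρ` with `ρ (a, b) ≤ b - a`. For `ε > 0` let
`U = ⋃ₙ (qₙ - rₙ, qₙ + rₙ)` with `(qₙ)` dense and `∑ 2 rₙ < ε`; the closed nowhere dense sets
`{t | x - t ∉ U}` for `x` in a set `X` of size `< cov(M)` do not cover `ℝ`, so some translate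
`t + U` covers `X`, and `ρ X ≤ ε`. A σ-finite measure has the same null sets as a probability
measure.
-/

open Set Metric TopologicalSpace ProbabilityTheory
open scoped ENNReal Topology

theorem Cardinal.mk_Iic_toType_ord_lt {c : Cardinal} (hc : ℵ₀ ≤ c) (i : c.ord.ToType) :
    #(Iic i) < c := by
  rw [← Iio_insert]
  exact mk_insert_le.trans_lt <|
    add_lt_of_lt hc (by simpa using mk_Iio_lt i) (one_lt_aleph0.trans_le hc)

theorem IsOpen.isMeagre_compl {X : Type*} [TopologicalSpace X] {U : Set X} (hU : IsOpen U)
    (hd : Dense U) : IsMeagre Uᶜ := by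
  rw [IsMeagre, compl_compl]
  exact residual_of_dense_open hU hd

theorem isMeagre_singleton {X : Type*} [TopologicalSpace X] [T1Space X] (x : X)
    [(𝓝[≠] x).NeBot] : IsMeagre ({x} : Set X) :=
  (isClosed_singleton.isNowhereDense_iff.2 (interior_singleton x)).isMeagre

theorem dense_iUnion_ball_denseSeq {X : Type*} [PseudoMetricSpace X] [SeparableSpace X]
    [Nonempty X] {r : ℕ → ℝ} (hr : ∀ n, 0 < r n) : Dense (⋃ n, ball (denseSeq X n) (r n)) :=
  (denseRange_denseSeq X).mono <|
    range_subset_iff.2 fun n => mem_iUnion_of_mem n (mem_ball_self (hr n))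

theorem aleph0_le_covMeager : ℵ₀ ≤ covMeager := by
  refine le_csInf ⟨_, range ({·}), rfl, forall_mem_range.2 fun x => isMeagre_singleton x,
    by rw [sUnion_range, iUnion_of_singleton]⟩ ?_
  rintro _ ⟨S, rfl, hSm, hSu⟩
  by_contra! hS
  have hSc : S.Countable := countable_coe_iff.1 (mk_le_aleph0_iff.1 hS.le)
  refine not_isMeagre_of_isOpen (isOpen_univ (X := ℝ)) univ_nonempty ?_
  rw [← hSu, sUnion_eq_biUnion]
  exact isMeagre_biUnion hSc hSm

theorem exists_forall_notMem_of_mk_lt_covMeager {ι : Type} (s : ι → Set ℝ)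
    (hs : ∀ i, IsMeagre (s i)) (hι : #ι < covMeager) : ∃ t, ∀ i, t ∉ s i := by
  by_contra! hcover
  have hcov : covMeager ≤ #(range s) := by
    apply csInf_le'
    exact ⟨range s, rfl, forall_mem_range.2 hs,
      sUnion_range s ▸ eq_univ_of_forall fun t => mem_iUnion.2 (hcover t)⟩
  exact (hcov.trans mk_range_le).not_gt hι

theorem exists_meagre_cofinal_family :
    ∃ D : Set (Set ℝ), #D = cofMeager ∧ (∀ A ∈ D, IsMeagre A) ∧
      ∀ M : Set ℝ, IsMeagre M → ∃ A ∈ D, M ⊆ A :=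
  (csInf_mem ⟨_, {A | IsMeagre A}, rfl, fun _ hA => hA, fun M hM => ⟨M, hM, subset_rfl⟩⟩ :
    cofMeager ∈ _)

theorem exists_meagre_cofinal_family_indexed_by_covMeager (h : covMeager = cofMeager) :
    ∃ f : covMeager.ord.ToType → Set ℝ,
      (∀ i, IsMeagre (f i)) ∧ ∀ M : Set ℝ, IsMeagre M → ∃ i, M ⊆ f i := by
  obtain ⟨D, hD, hDm, hDcof⟩ := exists_meagre_cofinal_family
  obtain ⟨e⟩ : Nonempty (covMeager.ord.ToType ≃ D) :=
    Cardinal.eq.1 (by rw [mk_ord_toType, hD, h])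
  refine ⟨fun i => e i, fun i => hDm _ (e i).2, fun M hM => ?_⟩
  obtain ⟨A, hA, hMA⟩ := hDcof M hM
  exact ⟨e.symm ⟨A, hA⟩, by simpa using hMA⟩

theorem exists_not_isMeagre_forall_mk_inter_lt (h : covMeager = cofMeager) :
    ∃ A : Set ℝ, (∀ M : Set ℝ, IsMeagre M → #(A ∩ M : Set ℝ) < covMeager) ∧ ¬ IsMeagre A := by
  obtain ⟨f, hfm, hfcof⟩ := exists_meagre_cofinal_family_indexed_by_covMeager h
  choose x hx using fun i => exists_forall_notMem_of_mk_lt_covMeager (fun j : Iic i => f j)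
    (fun j => hfm j) (mk_Iic_toType_ord_lt aleph0_le_covMeager i)
  refine ⟨range x, fun M hM => ?_, fun hA => ?_⟩
  · obtain ⟨i, hMi⟩ := hfcof M hM
    have hsub : range x ∩ M ⊆ x '' Iio i := by
      rintro _ ⟨⟨j, rfl⟩, hjM⟩
      exact ⟨j, show j < i from not_le.1 fun hij => hx j ⟨i, hij⟩ (hMi hjM), rfl⟩
    calc #(range x ∩ M : Set ℝ) ≤ #(x '' Iio i) := mk_le_mk_of_subset hsub
      _ ≤ #(Iio i) := mk_image_le
      _ < covMeager := by simpa using mk_Iio_lt i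
  · obtain ⟨i, hi⟩ := hfcof _ hA
    exact hx i ⟨i, self_mem_Iic⟩ (hi (mem_range_self i))

section NullComeagre

variable {X : Type*} [MetricSpace X] [SeparableSpace X] [Nonempty X] [MeasurableSpace X]
  [OpensMeasurableSpace X] (μ : Measure X) [IsFiniteMeasure μ] [NullSingletonClass μ]

theorem exists_isOpen_dense_measure_lt {ε : ℝ≥0∞} (hε : ε ≠ 0) :
    ∃ U : Set X, IsOpen U ∧ Dense U ∧ μ U < ε := by
  obtain ⟨δ, hδ, hδε⟩ := ENNReal.exists_pos_sum_of_countable' hε ℕ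
  have hball (n : ℕ) : ∃ r > 0, μ (ball (denseSeq X n) r) < δ n := by
    have hlim := tendsto_measure_thickening (μ := μ) (s := {denseSeq X n})
      ⟨1, one_pos, measure_ne_top μ _⟩
    simp only [thickening_singleton, closure_singleton, measure_singleton] at hlim
    exact ((hlim.eventually (gt_mem_nhds (hδ n))).and self_mem_nhdsWithin).exists.imp
      fun r hr => ⟨hr.2, hr.1⟩
  choose r hr hrδ using hball
  refine ⟨⋃ n, ball (denseSeq X n) (r n), isOpen_iUnion fun n => isOpen_ball,
    dense_iUnion_ball_denseSeq hr, ?_⟩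
  calc μ (⋃ n, ball (denseSeq X n) (r n)) ≤ ∑' n, μ (ball (denseSeq X n) (r n)) :=
        measure_iUnion_le _
    _ ≤ ∑' n, δ n := ENNReal.tsum_le_tsum fun n => (hrδ n).le
    _ < ε := hδε

theorem exists_measure_zero_isMeagre_compl : ∃ G : Set X, μ G = 0 ∧ IsMeagre Gᶜ := by
  choose U hUo hUd hUμ using fun n : ℕ =>
    exists_isOpen_dense_measure_lt μ (ENNReal.inv_ne_zero.2 (ENNReal.natCast_ne_top n))
  refine ⟨⋂ n, U n, ?_, ?_⟩
  · by_contra hne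
    obtain ⟨n, hn⟩ := ENNReal.exists_inv_nat_lt hne
    exact lt_asymm hn ((measure_mono (iInter_subset U n)).trans_lt (hUμ n))
  · rw [compl_iInter]
    exact isMeagre_iUnion fun n => (hUo n).isMeagre_compl (hUd n)

end NullComeagre

theorem measure_cdf_preimage_Ioo_le (ν : Measure ℝ) [IsProbabilityMeasure ν]
    [NullSingletonClass ν] (a b : ℝ) : ν (cdf ν ⁻¹' Ioo a b) ≤ ENNReal.ofReal (b - a) := by
  rw [((monotone_cdf ν).measurable measurableSet_Ioo).measure_eq_iSup_isCompact]
  refine iSup₂_le fun K hKS => iSup_le fun hK => ?_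
  rcases K.eq_empty_or_nonempty with rfl | hne
  · simp
  have hx := hKS (hK.sInf_mem hne)
  have hy := hKS (hK.sSup_mem hne)
  calc ν K ≤ ν (Icc (sInf K) (sSup K)) :=
        measure_mono fun z hz => ⟨csInf_le hK.bddBelow hz, le_csSup hK.bddAbove hz⟩
    _ = ν (Ioc (sInf K) (sSup K)) := measure_congr Ioc_ae_eq_Icc.symm
    _ = ENNReal.ofReal (cdf ν (sSup K) - cdf ν (sInf K)) := by
        rw [← (cdf ν).measure_Ioc, measure_cdf]
    _ ≤ ENNReal.ofReal (b - a) := ENNReal.ofReal_le_ofReal (by linarith [hx.1, hy.2])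

theorem measure_eq_zero_of_mk_lt_covMeager_of_measure_Ioo_le {ρ : Measure ℝ}
    (hρ : ∀ a b, ρ (Ioo a b) ≤ ENNReal.ofReal (b - a)) {X : Set ℝ} (hX : #X < covMeager) :
    ρ X = 0 := by
  refine le_antisymm (ENNReal.le_of_forall_pos_le_add fun ε hε _ => ?_) bot_le
  obtain ⟨r, hr, hrε⟩ := ENNReal.exists_pos_sum_of_countable (ENNReal.coe_ne_zero.2 hε.ne') ℕ
  set U := ⋃ n, ball (denseSeq ℝ n) (r n / 2 : ℝ)
  have hU : IsMeagre Uᶜ := (isOpen_iUnion fun n => isOpen_ball).isMeagre_compl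
    (dense_iUnion_ball_denseSeq fun n => half_pos (hr n))
  obtain ⟨t, ht⟩ := exists_forall_notMem_of_mk_lt_covMeager
    (fun x : X => (fun s => (x : ℝ) - s) ⁻¹' Uᶜ)
    (fun x => hU.preimage_of_isOpenMap (by fun_prop) (Homeomorph.subLeft (x : ℝ)).isOpenMap) hX
  have hcover : X ⊆ ⋃ n, Ioo (denseSeq ℝ n + t - r n / 2) (denseSeq ℝ n + t + r n / 2) := by
    intro x hx
    obtain ⟨n, hn⟩ := mem_iUnion.1 (not_not.1 (ht ⟨x, hx⟩))
    rw [Real.ball_eq_Ioo] at hn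
    exact mem_iUnion_of_mem n ⟨by linarith [hn.1], by linarith [hn.2]⟩
  calc ρ X ≤ ∑' n, ρ (Ioo (denseSeq ℝ n + t - r n / 2) (denseSeq ℝ n + t + r n / 2)) :=
        (measure_mono hcover).trans (measure_iUnion_le _)
    _ ≤ ∑' n, (r n : ℝ≥0∞) := ENNReal.tsum_le_tsum fun n => (hρ _ _).trans_eq (by
        rw [show denseSeq ℝ n + t + r n / 2 - (denseSeq ℝ n + t - r n / 2) = r n by ring,
          ENNReal.ofReal_coe_nnreal])
    _ ≤ 0 + ε := by rw [zero_add]; exact hrε.le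

theorem measure_eq_zero_of_mk_lt_covMeager (ν : Measure ℝ) [IsProbabilityMeasure ν]
    [NullSingletonClass ν] {X : Set ℝ} (hX : #X < covMeager) : ν X = 0 := by
  have hmeas : Measurable (cdf ν) := (monotone_cdf ν).measurable
  refine nonpos_iff_eq_zero.1 <| (Measure.le_map_apply_image hmeas.aemeasurable X).trans_eq <|
    measure_eq_zero_of_mk_lt_covMeager_of_measure_Ioo_le (fun a b => ?_) (mk_image_le.trans_lt hX)
  rw [Measure.map_apply hmeas measurableSet_Ioo]
  exact measure_cdf_preimage_Ioo_le ν a b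

theorem measure_eq_zero_of_forall_isMeagre_mk_inter_lt (ν : Measure ℝ) [IsProbabilityMeasure ν]
    [NullSingletonClass ν] {A : Set ℝ}
    (hA : ∀ M : Set ℝ, IsMeagre M → #(A ∩ M : Set ℝ) < covMeager) : ν A = 0 := by
  obtain ⟨G, hG, hGc⟩ := exists_measure_zero_isMeagre_compl ν
  exact measure_mono_null (fun x hx => (em (x ∈ G)).imp_right fun hxG => ⟨hx, hxG⟩)
    (measure_union_null hG (measure_eq_zero_of_mk_lt_covMeager ν (hA _ hGc)))

/-- If `cov(M) = cof(M)`, then there exists a universally null subset of `ℝ` that is not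
meager. -/
theorem stmt15 (h : covMeager = cofMeager) :
    ∃ A : Set ℝ,
      (∀ μ : Measure ℝ, SigmaFinite μ → (∀ x : ℝ, μ {x} = 0) →
        ∃ N : Set ℝ, MeasurableSet N ∧ A ⊆ N ∧ μ N = 0) ∧
      ¬ IsMeagre A := by
  obtain ⟨A, hAsmall, hA⟩ := exists_not_isMeagre_forall_mk_inter_lt h
  refine ⟨A, fun μ _ hμ => ?_, hA⟩
  suffices μ A = 0 by
    obtain ⟨N, hAN, hN, hμN⟩ := exists_measurable_superset_of_null this
    exact ⟨N, hN, hAN, hμN⟩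
  rcases eq_zero_or_neZero μ with rfl | _
  · rfl
  have : NullSingletonClass μ.toFinite := ⟨fun x => toFinite_apply_eq_zero_iff.2 (hμ x)⟩
  exact toFinite_apply_eq_zero_iff.1
    (measure_eq_zero_of_forall_isMeagre_mk_inter_lt μ.toFinite hAsmall)
end

section
/- Let (μ_n)_{n∈ω} be atomless Borel probability measures on ℝ and let μ be their product measure on ∏_{n∈ω} ℝ. If D ⊆ ∏_{n∈ω} ℝ is a Borel set with μ(D) > 0, then there exist perfect sets C_n ⊆ ℝ (n ∈ ω) such that ∏_{n∈ω} C_n ⊆ D. -/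
/-!
Shrink `D` to a closed set `K` of positive measure and peel off one coordinate at a time. The
product measure is `ν 0 ⊗ (product of the tail)`, so the key step is: if `S ⊆ X × Y` has closed
vertical sections and positive `η ⊗ P` measure, with `η` atomless, then some perfect `C ⊆ X`
has `P (⋂ x ∈ C, S_x) > 0`. That set of `y` is again closed, so the step iterates, and every
point of `∏ C n` is a limit of points of `K`.

For the key step, build a Cantor scheme of sets `A_s` of positive `η`-measure, with vanishing
diameters and siblings of disjoint closures (an atomless measure has two distinct points in its
support), on each of which the sections `S_x` vary by at most `w_s` in `P`-measure (a countable
measure-dense family for `P` cuts any set of positive measure into countably many pieces of small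
variation). For points `x_s ∈ A_s` the sections `S_{x_s}` lose at most `∑ w_s < P (S_{x_∅})`
along the tree, so their intersection has positive measure, and the perfect set induced by the
scheme lies in the closure of `{x_s}`.
-/

open MeasureTheory Set Filter Topology Metric
open scoped ENNReal NNReal symmDiff

theorem Finset.prod_eq_ite_mul_prod_preimage_succ {M : Type*} [CommMonoid M] (s : Finset ℕ)
    (f : ℕ → M) [Decidable (0 ∈ s)] :
    ∏ i ∈ s, f i = (if 0 ∈ s then f 0 else 1) *
      ∏ n ∈ s.preimage Nat.succ Nat.succ_injective.injOn, f (n + 1) := by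
  classical
  rw [Finset.prod_preimage', ← Finset.prod_filter_not_mul_prod_filter s (· ∈ Set.range Nat.succ)]
  congr 1
  rw [Finset.prod_filter]
  simp [Nat.range_succ]

theorem MeasureTheory.Measure.nontrivial_support {X : Type*} [TopologicalSpace X]
    [HereditarilyLindelofSpace X] [MeasurableSpace X] {μ : Measure X} [NullSingletonClass μ]
    (hμ : μ ≠ 0) : μ.support.Nontrivial := by
  obtain ⟨x, hx⟩ := Measure.nonempty_support hμ
  by_contra h
  have hsub : μ.support ⊆ {x} := fun y hy => (not_nontrivial_iff.1 h) hy hx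
  refine hμ (Measure.measure_univ_eq_zero.1 (le_antisymm ?_ bot_le))
  calc μ univ ≤ μ μ.supportᶜ + μ μ.support :=
        (measure_mono (by simp)).trans (measure_union_le _ _)
    _ ≤ 0 := by simp [measure_mono_null hsub (measure_singleton x)]

namespace PerfectRectangle

theorem sdiff_iInter_subset_iUnion_sdiff_cons {α β : Type*} (F : List α → Set β) :
    F [] \ ⋂ l, F l ⊆ ⋃ p : α × List α, F p.2 \ F (p.1 :: p.2) := by
  rintro y ⟨hy, hyF⟩
  obtain ⟨l, hl⟩ : ∃ l, y ∉ F l := by simpa using hyF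
  induction l with
  | nil => exact absurd hy hl
  | cons a l ih =>
    by_cases hyl : y ∈ F l
    · exact mem_iUnion.2 ⟨(a, l), hyl, hl⟩
    · exact ih hyl

section Splitting

variable {X : Type*} [MetricSpace X] [SecondCountableTopology X] [MeasurableSpace X]
  [OpensMeasurableSpace X] {η : Measure X}

theorem exists_split_disjoint_closure [NullSingletonClass η] {A : Set X} (hA : 0 < η A) {r : ℝ}
    (hr : 0 < r) :
    ∃ B : Bool → Set X, (∀ b, B b ⊆ A ∧ 0 < η (B b) ∧ ediam (B b) ≤ ENNReal.ofReal r) ∧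
      Disjoint (closure (B true)) (closure (B false)) := by
  have hA' : η.restrict A ≠ 0 := by rwa [← Measure.measure_univ_pos, Measure.restrict_apply_univ]
  obtain ⟨x₀, hx₀, x₁, hx₁, hne⟩ := Measure.nontrivial_support hA'
  set ρ := min (r / 2) (dist x₀ x₁ / 3)
  have hρ : 0 < ρ := lt_min (by linarith) (by have := dist_pos.2 hne; linarith)
  refine ⟨fun b => A ∩ ball (cond b x₀ x₁) ρ, fun b => ⟨inter_subset_left, ?_, ?_⟩, ?_⟩
  · have hx : cond b x₀ x₁ ∈ (η.restrict A).support := by cases b <;> assumption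
    dsimp only
    rw [inter_comm A, ← Measure.restrict_apply measurableSet_ball]
    exact (Measure.mem_support_iff_forall _).1 hx _ (ball_mem_nhds _ hρ)
  · refine ediam_le_of_forall_dist_le fun y hy z hz => ?_
    have := dist_triangle_right y z (cond b x₀ x₁)
    have := mem_ball.1 hy.2
    have := mem_ball.1 hz.2
    have := min_le_left (r / 2) (dist x₀ x₁ / 3)
    linarith
  · have hcl : ∀ x, closure (A ∩ ball x ρ) ⊆ closedBall x ρ := fun x =>
      (closure_mono inter_subset_right).trans closure_ball_subset_closedBall
    refine (closedBall_disjoint_closedBall ?_).mono (hcl x₀) (hcl x₁)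
    have := min_le_right (r / 2) (dist x₀ x₁ / 3)
    have := dist_pos.2 hne
    linarith

end Splitting

section Sections

variable {X Y : Type*} [MeasurableSpace X] [MeasurableSpace Y] {η : Measure X} {P : Measure Y}

theorem exists_subset_measure_sdiff_preimage_le [IsFiniteMeasure P] [IsSeparable P]
    {S : Set (X × Y)} (hS : MeasurableSet S) {A : Set X} (hA : 0 < η A) {ε : ℝ≥0} (hε : 0 < ε) :
    ∃ A' ⊆ A, 0 < η A' ∧
      ∀ x ∈ A', ∀ x' ∈ A', P (Prod.mk x ⁻¹' S \ Prod.mk x' ⁻¹' S) ≤ ε := by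
  obtain ⟨𝒜, h𝒜, hdense⟩ := exists_countable_measureDense P
  have := h𝒜.to_subtype
  set piece : 𝒜 → Set X := fun W => A ∩ {x | P ((Prod.mk x ⁻¹' S) ∆ W) < ENNReal.ofReal (ε / 2)}
  have hcover : A ⊆ ⋃ W, piece W := fun x hx => by
    obtain ⟨W, hW, hxW⟩ := hdense.approx _ (measurable_prodMk_left hS) (measure_ne_top P _)
      (ε / 2) (by positivity)
    exact mem_iUnion.2 ⟨⟨W, hW⟩, hx, hxW⟩
  obtain ⟨W, hW⟩ := exists_measure_pos_of_not_measure_iUnion_null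
    (pos_iff_ne_zero.1 (hA.trans_le (measure_mono hcover)))
  refine ⟨piece W, inter_subset_left, hW, fun x hx x' hx' => ?_⟩
  calc P (Prod.mk x ⁻¹' S \ Prod.mk x' ⁻¹' S)
      ≤ P ((Prod.mk x ⁻¹' S) ∆ W ∪ (Prod.mk x' ⁻¹' S) ∆ W) := measure_mono fun y hy => by
        by_cases hyW : y ∈ (W : Set Y)
        · exact Or.inr (Or.inr ⟨hyW, hy.2⟩)
        · exact Or.inl (Or.inl ⟨hy.1, hyW⟩)
    _ ≤ ENNReal.ofReal (ε / 2) + ENNReal.ofReal (ε / 2) :=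
        (measure_union_le _ _).trans (add_le_add hx.2.le hx'.2.le)
    _ = ε := by
        rw [← ENNReal.ofReal_add (by positivity) (by positivity), add_halves,
          ENNReal.ofReal_coe_nnreal]

theorem exists_measure_setOf_le_pos {f : X → ℝ≥0∞} (hf : 0 < ∫⁻ x, f x ∂η) :
    ∃ δ : ℝ≥0∞, 0 < δ ∧ 0 < η {x | δ ≤ f x} := by
  have hsupp : η {x | f x ≠ 0} ≠ 0 := fun h => hf.ne' (lintegral_eq_zero_of_ae_eq_zero h)
  have hcover : {x | f x ≠ 0} ⊆ ⋃ n : ℕ, {x | (n : ℝ≥0∞)⁻¹ ≤ f x} := fun x hx =>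
    mem_iUnion.2 ((ENNReal.exists_inv_nat_lt hx).imp fun _ => le_of_lt)
  obtain ⟨n, hn⟩ := exists_measure_pos_of_not_measure_iUnion_null
    (pos_iff_ne_zero.1 ((pos_iff_ne_zero.2 hsupp).trans_le (measure_mono hcover)))
  exact ⟨_, ENNReal.inv_pos.2 (ENNReal.natCast_ne_top n), hn⟩

end Sections

section Scheme

variable {X : Type*} [MetricSpace X] [CompleteSpace X]

theorem exists_perfect_subset_closure_range (A : List Bool → Set X) (hne : ∀ l, (A l).Nonempty)
    (hanti : CantorScheme.Antitone A)
    (hdisj : ∀ l, Disjoint (closure (A (true :: l))) (closure (A (false :: l))))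
    (hdiam : CantorScheme.VanishingDiam A) {p : List Bool → X} (hp : ∀ l, p l ∈ A l) :
    ∃ C : Set X, Perfect C ∧ C.Nonempty ∧ C ⊆ closure (range p) := by
  set B : List Bool → Set X := fun l => closure (A l)
  have hBdiam : CantorScheme.VanishingDiam B := fun ω => by
    simpa only [B, ediam_closure] using hdiam ω
  have hBdom : (CantorScheme.inducedMap B).1 = univ :=
    CantorScheme.ClosureAntitone.map_of_vanishingDiam hBdiam
      (fun l b => by simpa only [B, closure_closure] using closure_mono (hanti l b))
      (fun l => (hne l).closure)
  have hBdisj : CantorScheme.Disjoint B := fun l a b hab => by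
    cases a <;> cases b
    exacts [absurd rfl hab, (hdisj l).symm, hdisj l, absurd rfl hab]
  set f : (ℕ → Bool) → X := fun ω => (CantorScheme.inducedMap B).2 ⟨ω, hBdom ▸ mem_univ ω⟩
  have hfB : ∀ ω n, f ω ∈ B (PiNat.res ω n) := fun ω n => CantorScheme.map_mem _ n
  have hinj : Function.Injective f := fun ω ω' h =>
    congrArg Subtype.val (hBdisj.map_injective h)
  have hpre : Preperfect (range f) := by
    rintro _ ⟨ω, rfl⟩
    rw [accPt_iff_nhds]
    intro U hU
    obtain ⟨ε, hε, hball⟩ := Metric.mem_nhds_iff.1 hU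
    obtain ⟨n, hn⟩ := hBdiam.dist_lt ε hε ω
    set ω' := Function.update ω n (!ω n)
    have hres : PiNat.res ω' n = PiNat.res ω n :=
      PiNat.res_eq_res.2 fun m hm => Function.update_of_ne hm.ne _ _
    refine ⟨f ω', ⟨hball (mem_ball.2 (hn _ (hres ▸ hfB ω' n) _ (hfB ω n))), ω', rfl⟩,
      fun h => ?_⟩
    simpa [ω'] using congrFun (hinj h) n
  refine ⟨closure (range f), hpre.perfect_closure, (range_nonempty f).closure,
    closure_minimal ?_ isClosed_closure⟩
  rintro _ ⟨ω, rfl⟩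
  refine Metric.mem_closure_iff.2 fun ε hε => ?_
  obtain ⟨n, hn⟩ := hBdiam.dist_lt ε hε ω
  exact ⟨p (PiNat.res ω n), mem_range_self _, hn _ (hfB ω n) _ (subset_closure (hp _))⟩

end Scheme

def unfoldTree {α β : Type*} (root : α) (child : List β → α → β → α) : List β → α
  | [] => root
  | b :: l => child l (unfoldTree root child l) b

theorem vanishingDiam_of_ediam_cons_le {X : Type*} [PseudoMetricSpace X] {A : List Bool → Set X}
    (h : ∀ b l, ediam (A (b :: l)) ≤ ENNReal.ofReal (2⁻¹ ^ l.length)) :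
    CantorScheme.VanishingDiam A := fun ω => by
  rw [← tendsto_add_atTop_iff_nat 1]
  have hlim : Tendsto (fun n => ENNReal.ofReal ((2⁻¹ : ℝ) ^ n)) atTop (𝓝 0) := by
    simpa using ENNReal.tendsto_ofReal
      (tendsto_pow_atTop_nhds_zero_of_lt_one (by norm_num) (by norm_num : (2⁻¹ : ℝ) < 1))
  refine tendsto_of_tendsto_of_tendsto_of_le_of_le tendsto_const_nhds hlim (fun _ => bot_le)
    fun n => ?_
  simpa only [PiNat.res_succ, PiNat.res_length] using h (ω n) (PiNat.res ω n)

section Fusion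

variable {X Y : Type*} [MetricSpace X] [SecondCountableTopology X] [MeasurableSpace X]
  [OpensMeasurableSpace X] [MeasurableSpace Y] {η : Measure X} [NullSingletonClass η]
  {P : Measure Y} [IsFiniteMeasure P] [IsSeparable P] {S : Set (X × Y)}

theorem exists_cantorScheme_measure_sdiff_preimage_le (hS : MeasurableSet S) {A₀ : Set X}
    (hA₀ : 0 < η A₀) {w : List Bool → ℝ≥0} (hw : ∀ l, 0 < w l) :
    ∃ A : List Bool → Set X, A [] ⊆ A₀ ∧ (∀ l, 0 < η (A l)) ∧ CantorScheme.Antitone A ∧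
      (∀ l, Disjoint (closure (A (true :: l))) (closure (A (false :: l)))) ∧
      CantorScheme.VanishingDiam A ∧
      ∀ l, ∀ x ∈ A l, ∀ x' ∈ A l, P (Prod.mk x ⁻¹' S \ Prod.mk x' ⁻¹' S) ≤ w l := by
  have shrink (A : {A : Set X // 0 < η A}) (l : List Bool) :
      ∃ A' : {A : Set X // 0 < η A}, A'.1 ⊆ A.1 ∧
        ∀ x ∈ A'.1, ∀ x' ∈ A'.1, P (Prod.mk x ⁻¹' S \ Prod.mk x' ⁻¹' S) ≤ w l :=
    let ⟨A', hsub, hpos, hosc⟩ := exists_subset_measure_sdiff_preimage_le hS A.2 (hw l)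
    ⟨⟨A', hpos⟩, hsub, hosc⟩
  have split (A : {A : Set X // 0 < η A}) (n : ℕ) :
      ∃ B : Bool → {A : Set X // 0 < η A},
        (∀ b, (B b).1 ⊆ A.1 ∧ ediam (B b).1 ≤ ENNReal.ofReal (2⁻¹ ^ n)) ∧
        Disjoint (closure (B true).1) (closure (B false).1) :=
    let ⟨B, hB, hdisj⟩ := exists_split_disjoint_closure A.2 (r := 2⁻¹ ^ n) (by positivity)
    ⟨fun b => ⟨B b, (hB b).2.1⟩, fun b => ⟨(hB b).1, (hB b).2.2⟩, hdisj⟩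
  choose shrink hshrink_sub hshrink_osc using shrink
  choose split hsplit hsplit_disj using split
  set T := unfoldTree (shrink ⟨A₀, hA₀⟩ []) fun l A b => shrink (split A l.length b) (b :: l)
  have hT_cons (b : Bool) (l : List Bool) : (T (b :: l)).1 ⊆ (split (T l) l.length b).1 :=
    hshrink_sub _ _
  refine ⟨fun l => (T l).1, hshrink_sub _ _, fun l => (T l).2,
    fun l b => (hT_cons b l).trans (hsplit _ _ b).1,
    fun l => (hsplit_disj (T l) l.length).mono (closure_mono (hT_cons true l))
      (closure_mono (hT_cons false l)),
    vanishingDiam_of_ediam_cons_le fun b l => (ediam_mono (hT_cons b l)).trans (hsplit _ _ _).2,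
    fun l => ?_⟩
  cases l <;> exact hshrink_osc _ _

variable [CompleteSpace X]

theorem exists_perfect_measure_setOf_forall_mem_pos (hS : MeasurableSet S)
    (hclosed : ∀ y, IsClosed {x | (x, y) ∈ S}) (hpos : 0 < η.prod P S) :
    ∃ C : Set X, Perfect C ∧ C.Nonempty ∧ 0 < P {y | ∀ x ∈ C, (x, y) ∈ S} := by
  obtain ⟨δ, hδ, hroot⟩ := exists_measure_setOf_le_pos (η := η)
    (f := fun x => P (Prod.mk x ⁻¹' S)) (by rwa [← Measure.prod_apply hS])
  -- each `w l` is charged once for each of the two children of `l`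
  obtain ⟨w, hw, hwδ⟩ :=
    ENNReal.exists_pos_sum_of_countable (ENNReal.half_pos hδ.ne').ne' (List Bool)
  obtain ⟨A, hA₀, hApos, hanti, hdisj, hdiam, hosc⟩ :=
    exists_cantorScheme_measure_sdiff_preimage_le (P := P) hS hroot hw
  choose p hp using fun l => nonempty_of_measure_ne_zero (hApos l).ne'
  obtain ⟨C, hC, hCne, hCp⟩ :=
    exists_perfect_subset_closure_range A (fun l => ⟨p l, hp l⟩) hanti hdisj hdiam hp
  refine ⟨C, hC, hCne, ?_⟩
  set R := ⋂ l, Prod.mk (p l) ⁻¹' S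
  have hRsub : R ⊆ {y | ∀ x ∈ C, (x, y) ∈ S} := fun y hy x hx =>
    closure_minimal (t := {x | (x, y) ∈ S}) (range_subset_iff.2 fun l => mem_iInter.1 hy l)
      (hclosed y) (hCp hx)
  refine (pos_iff_ne_zero.2 fun hR0 => ?_).trans_le (measure_mono hRsub)
  have hloss : P (Prod.mk (p []) ⁻¹' S \ R) < δ := calc
    _ ≤ P (⋃ q : Bool × List Bool, Prod.mk (p q.2) ⁻¹' S \ Prod.mk (p (q.1 :: q.2)) ⁻¹' S) :=
        measure_mono (sdiff_iInter_subset_iUnion_sdiff_cons fun l => Prod.mk (p l) ⁻¹' S)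
    _ ≤ ∑' q : Bool × List Bool, (w q.2 : ℝ≥0∞) := (measure_iUnion_le _).trans
        (ENNReal.tsum_le_tsum fun q => hosc _ _ (hp _) _ (hanti _ _ (hp _)))
    _ = ∑' l, (w l : ℝ≥0∞) + ∑' l, (w l : ℝ≥0∞) := by
        rw [ENNReal.tsum_prod (f := fun _ l => (w l : ℝ≥0∞)), tsum_fintype, Fintype.sum_bool]
    _ < δ / 2 + δ / 2 := ENNReal.add_lt_add hwδ hwδ
    _ = δ := ENNReal.add_halves δ
  rw [measure_sdiff_null hR0] at hloss
  exact (hA₀ (hp [])).not_gt hloss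

end Fusion

section Sequences

variable {α : Type*}

def cons (a : α) (y : ℕ → α) : ℕ → α
  | 0 => a
  | n + 1 => y n

def splice (z : ℕ → α) (m : ℕ) (y : ℕ → α) : ℕ → α := fun n => if n < m then z n else y (n - m)

theorem splice_zero (z y : ℕ → α) : splice z 0 y = y := by funext n; simp [splice]

theorem splice_succ (z : ℕ → α) (m : ℕ) (y : ℕ → α) :
    splice z (m + 1) y = splice z m (cons (z m) y) := by
  funext n
  rcases lt_trichotomy n m with h | rfl | h
  · simp [splice, h, h.trans (Nat.lt_succ_self m)]
  · simp [splice, cons]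
  · obtain ⟨k, rfl⟩ := Nat.exists_eq_add_of_lt h
    simp [splice, cons, show m + k + 1 - m = k + 1 by omega, show ¬ m + k + 1 < m by omega]

theorem tendsto_splice [TopologicalSpace α] (z : ℕ → α) (y : ℕ → ℕ → α) :
    Tendsto (fun m => splice z m (y m)) atTop (𝓝 z) :=
  tendsto_pi_nhds.2 fun n => tendsto_const_nhds.congr'
    ((eventually_gt_atTop n).mono fun m hm => by simp [splice, hm])

theorem continuous_cons [TopologicalSpace α] : Continuous fun p : α × (ℕ → α) => cons p.1 p.2 :=
  continuous_pi fun n => by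
    cases n
    exacts [continuous_fst, (continuous_apply _).comp continuous_snd]

theorem measurable_cons [MeasurableSpace α] : Measurable fun p : α × (ℕ → α) => cons p.1 p.2 :=
  measurable_pi_lambda _ fun n => by
    cases n
    exacts [measurable_fst, (measurable_pi_apply _).comp measurable_snd]

theorem infinitePi_map_cons [MeasurableSpace α] (μ : ℕ → Measure α)
    [∀ n, IsProbabilityMeasure (μ n)] :
    ((μ 0).prod (Measure.infinitePi fun n => μ (n + 1))).map (fun p => cons p.1 p.2) =
      Measure.infinitePi μ := by
  classical
  refine Measure.eq_infinitePi _ fun s t ht => ?_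
  have hpre : (fun p : α × (ℕ → α) => cons p.1 p.2) ⁻¹' (s : Set ℕ).pi t =
      (if 0 ∈ s then t 0 else univ) ×ˢ
        ((s.preimage Nat.succ Nat.succ_injective.injOn : Set ℕ).pi fun n => t (n + 1)) := by
    ext ⟨a, y⟩
    simp only [mem_preimage, Set.mem_pi, mem_prod, Finset.mem_coe, Finset.mem_preimage]
    constructor
    · intro h
      exact ⟨by split_ifs with h0; exacts [h 0 h0, mem_univ _], fun n hn => h (n + 1) hn⟩
    · rintro ⟨h0, h⟩ (_ | n) hn
      · simpa [hn, cons] using h0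
      · exact h n hn
  rw [Measure.map_apply measurable_cons (.pi s.countable_toSet fun i _ => ht i), hpre,
    Measure.prod_prod, Measure.infinitePi_pi _ fun i _ => ht (i + 1),
    Finset.prod_eq_ite_mul_prod_preimage_succ s]
  split_ifs <;> simp

end Sequences

section Product

variable {X : Type*} [MetricSpace X] [CompleteSpace X] [SecondCountableTopology X]
  [MeasurableSpace X] [BorelSpace X] (ν : ℕ → Measure X) [∀ n, IsProbabilityMeasure (ν n)]
  [∀ n, NullSingletonClass (ν n)]

theorem exists_perfect_forall_cons_mem {K : Set (ℕ → X)} (hK : IsClosed K)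
    (hpos : 0 < Measure.infinitePi ν K) :
    ∃ C : Set X, Perfect C ∧ C.Nonempty ∧ ∃ K' : Set (ℕ → X), IsClosed K' ∧
      0 < Measure.infinitePi (fun n => ν (n + 1)) K' ∧ ∀ a ∈ C, ∀ y ∈ K', cons a y ∈ K := by
  set S := (fun p : X × (ℕ → X) => cons p.1 p.2) ⁻¹' K
  have hS : IsClosed S := hK.preimage continuous_cons
  rw [← infinitePi_map_cons, Measure.map_apply measurable_cons hK.measurableSet] at hpos
  obtain ⟨C, hC, hCne, hCpos⟩ := exists_perfect_measure_setOf_forall_mem_pos hS.measurableSet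
    (fun y => hS.preimage (Continuous.prodMk_left y)) hpos
  refine ⟨C, hC, hCne, _, ?_, hCpos, fun a ha y hy => hy a ha⟩
  simp only [ofPred_forall]
  exact isClosed_biInter fun a _ => hS.preimage (Continuous.prodMk_right a)

theorem exists_perfect_pi_subset {K : Set (ℕ → X)} (hK : IsClosed K)
    (hpos : 0 < Measure.infinitePi ν K) :
    ∃ C : ℕ → Set X, (∀ n, Perfect (C n) ∧ (C n).Nonempty) ∧ univ.pi C ⊆ K := by
  set Good : ℕ → Set (ℕ → X) → Prop := fun m K =>
    IsClosed K ∧ 0 < Measure.infinitePi (fun n => ν (n + m)) K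
  have step (m : ℕ) (K : Set (ℕ → X)) (hK : Good m K) : ∃ C : Set X, (Perfect C ∧ C.Nonempty) ∧
      ∃ K', Good (m + 1) K' ∧ ∀ a ∈ C, ∀ y ∈ K', cons a y ∈ K := by
    obtain ⟨C, hC, hCne, K', hK', hK'pos, hcons⟩ :=
      exists_perfect_forall_cons_mem (fun n => ν (n + m)) hK.1 hK.2
    simp only [add_right_comm _ 1 m] at hK'pos
    exact ⟨C, ⟨hC, hCne⟩, K', ⟨hK', hK'pos⟩, hcons⟩
  choose! C hC next hnext hcons using step
  set Ks : ℕ → Set (ℕ → X) := fun m => Nat.rec K (fun m K' => next m K') m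
  have hgood (m : ℕ) : Good m (Ks m) := by
    induction m with
    | zero => exact ⟨hK, hpos⟩
    | succ m ih => exact hnext m _ ih
  refine ⟨fun m => C m (Ks m), fun m => hC m _ (hgood m), fun z hz => ?_⟩
  have hsplice (m : ℕ) : ∀ y ∈ Ks m, splice z m y ∈ K := by
    induction m with
    | zero => exact fun y hy => by rwa [splice_zero]
    | succ m ih =>
      intro y hy
      rw [splice_succ]
      exact ih _ (hcons m _ (hgood m) _ (hz m (mem_univ m)) y hy)
  choose y hy using fun m => nonempty_of_measure_ne_zero (hgood m).2.ne'
  exact hK.mem_of_tendsto (tendsto_splice z y) (Eventually.of_forall fun m => hsplice m _ (hy m))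

end Product

end PerfectRectangle

theorem stmt18_general (ν : ℕ → Measure ℝ) (hprob : ∀ n, IsProbabilityMeasure (ν n))
    (hatom : ∀ n, ∀ x : ℝ, ν n {x} = 0)
    (μ : Measure (ℕ → ℝ))
    (hcyl : ∀ (s : Finset ℕ) (t : ℕ → Set ℝ), (∀ n ∈ s, MeasurableSet (t n)) →
      μ (Set.pi ↑s t) = ∏ n ∈ s, ν n (t n))
    (D : Set (ℕ → ℝ)) (hD : MeasurableSet D) (hpos : 0 < μ D) :
    ∃ C : ℕ → Set ℝ, (∀ n, Perfect (C n) ∧ (C n).Nonempty) ∧ Set.univ.pi C ⊆ D := by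
  have : ∀ n, NullSingletonClass (ν n) := fun n => ⟨hatom n⟩
  obtain rfl : μ = Measure.infinitePi ν :=
    Measure.eq_infinitePi ν fun s t ht => hcyl s t fun n _ => ht n
  obtain ⟨K, hKD, hK, hKpos⟩ := hD.exists_lt_isClosed_of_ne_top (measure_ne_top _ _) hpos
  obtain ⟨C, hC, hCK⟩ := PerfectRectangle.exists_perfect_pi_subset ν hK hKpos
  exact ⟨C, hC, hCK.trans hKD⟩

/-- Let `(ν n)` be atomless Borel probability measures on `ℝ` and let `μ` be their product
measure on `ℕ → ℝ` (the Borel probability measure assigning to each cylinder set the product of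
the coordinate measures). If `D ⊆ ℕ → ℝ` is a Borel set with `μ D > 0`, then there exist perfect
sets `C n ⊆ ℝ` such that `∏ n, C n ⊆ D`. -/
theorem stmt18 (ν : ℕ → Measure ℝ) (hprob : ∀ n, IsProbabilityMeasure (ν n))
    (hatom : ∀ n, ∀ x : ℝ, ν n {x} = 0)
    (μ : Measure (ℕ → ℝ)) (hμprob : IsProbabilityMeasure μ)
    (hcyl : ∀ (s : Finset ℕ) (t : ℕ → Set ℝ), (∀ n ∈ s, MeasurableSet (t n)) →
      μ (Set.pi ↑s t) = ∏ n ∈ s, ν n (t n))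
    (D : Set (ℕ → ℝ)) (hD : MeasurableSet D) (hpos : 0 < μ D) :
    ∃ C : ℕ → Set ℝ, (∀ n, Perfect (C n) ∧ (C n).Nonempty) ∧ Set.univ.pi C ⊆ D :=
  stmt18_general ν hprob hatom μ hcyl D hD hpos
end
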